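/- Let F be the free group on two generators x and y, let R1 be the normal closure of {x}, R2 the normal closure of {[x,y]}, and R3 the normal closure of {[[x,y],x]} in F. Then there do not exist r ∈ R1 and s ∈ R2 with r·s ∈ R3 and [[x,y],x] ≡ [r,s] modulo γ4(F). -/

import Mathlib

/-!
Every element of `R2` or `R3` is a product of conjugates of commutators, so `s ∈ γ₂(F)` and
`rs ∈ γ₂(F)`, whence `r ∈ γ₂(F)`. The three subgroups lemma gives `[γ₂, γ₂] ≤ γ₄`, so
`[r, s] ∈ γ₄(F)` and the congruence would put `[[x, y], x]` in `γ₄(F)`. It is not there: mapping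
`x ↦ s`, `y ↦ ρ` onto the dihedral group of order 16, which has nilpotency class 3, sends
`[[x, y], x]` to `ρ⁴ ≠ 1`. Mathlib indexes the lower central series from `0`, so `γₙ` is
`lowerCentralSeries (n - 1)`.
-/

/-- The commutator `[x, y] = x⁻¹ y⁻¹ x y`. -/
def cmt {F : Type*} [Group F] (x y : F) : F := x⁻¹ * y⁻¹ * x * y

open scoped commutatorElement

theorem cmt_eq_commutatorElement {G : Type*} [Group G] (u v : G) : cmt u v = ⁅u⁻¹, v⁻¹⁆ := by
  simp [cmt, commutatorElement_def]

theorem map_cmt {G H : Type*} [Group G] [Group H] (f : G →* H) (u v : G) :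
    f (cmt u v) = cmt (f u) (f v) := by
  simp only [cmt, map_mul, map_inv]

namespace Subgroup

variable {G : Type*} [Group G]

theorem commutator_commutator_le_of_rotate {H₁ H₂ H₃ N : Subgroup G} [N.Normal]
    (h1 : ⁅⁅H₂, H₃⁆, H₁⁆ ≤ N) (h2 : ⁅⁅H₃, H₁⁆, H₂⁆ ≤ N) : ⁅⁅H₁, H₂⁆, H₃⁆ ≤ N := by
  rw [← QuotientGroup.ker_mk' N, ← map_eq_bot_iff] at h1 h2 ⊢
  simp only [map_commutator] at h1 h2 ⊢
  exact commutator_commutator_eq_bot_of_rotate h1 h2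

variable (G) in
theorem commutator_lowerCentralSeries_one_le_three :
    ⁅(⊤ : Subgroup G).lowerCentralSeries 1, (⊤ : Subgroup G).lowerCentralSeries 1⁆ ≤
      (⊤ : Subgroup G).lowerCentralSeries 3 := by
  have h : ⁅⁅(⊤ : Subgroup G).lowerCentralSeries 1, ⊤⁆, ⊤⁆ =
      (⊤ : Subgroup G).lowerCentralSeries 3 := rfl
  refine commutator_commutator_le_of_rotate (H₁ := ⊤) (H₂ := ⊤) ?_ h.le
  rw [commutator_comm ⊤, h]

theorem cmt_mem_lowerCentralSeries_one (u v : G) :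
    cmt u v ∈ (⊤ : Subgroup G).lowerCentralSeries 1 := by
  rw [cmt_eq_commutatorElement]
  exact commutator_mem_commutator (mem_top _) (mem_top _)

theorem normalClosure_cmt_le_lowerCentralSeries_one (u v : G) :
    normalClosure {cmt u v} ≤ (⊤ : Subgroup G).lowerCentralSeries 1 :=
  normalClosure_le_normal (Set.singleton_subset_iff.mpr (cmt_mem_lowerCentralSeries_one u v))

theorem cmt_mem_lowerCentralSeries_three {u v : G} (hu : u ∈ (⊤ : Subgroup G).lowerCentralSeries 1)
    (hv : v ∈ (⊤ : Subgroup G).lowerCentralSeries 1) :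
    cmt u v ∈ (⊤ : Subgroup G).lowerCentralSeries 3 := by
  rw [cmt_eq_commutatorElement]
  exact commutator_lowerCentralSeries_one_le_three G
    (commutator_mem_commutator (inv_mem hu) (inv_mem hv))

end Subgroup

namespace DihedralGroup

variable {n : ℕ}

theorem r_mul_mem_zpowers (i k : ZMod n) : r (i * k) ∈ Subgroup.zpowers (r i) :=
  ⟨(k.cast : ℤ), by simp only [r_zpow, ZMod.intCast_zmod_cast]⟩

theorem commutatorElement_mem_zpowers_r_two (g h : DihedralGroup n) :
    ⁅g, h⁆ ∈ Subgroup.zpowers (r 2) := by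
  rcases g with i | i <;> rcases h with j | j <;>
    simp only [commutatorElement_def, r_mul_r, r_mul_sr, sr_mul_r, sr_mul_sr, inv_r, inv_sr]
  · convert r_mul_mem_zpowers (2 : ZMod n) 0 using 2; ring
  · convert r_mul_mem_zpowers (2 : ZMod n) i using 2; ring
  · convert r_mul_mem_zpowers (2 : ZMod n) (-j) using 2; ring
  · convert r_mul_mem_zpowers (2 : ZMod n) (j - i) using 2; ring

theorem commutatorElement_mem_zpowers_r_two_mul {i : ZMod n} {g : DihedralGroup n}
    (hg : g ∈ Subgroup.zpowers (r i)) (h : DihedralGroup n) :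
    ⁅g, h⁆ ∈ Subgroup.zpowers (r (2 * i)) := by
  obtain ⟨k, rfl⟩ := hg
  rcases h with j | j <;>
    simp only [r_zpow, commutatorElement_def, r_mul_r, r_mul_sr, sr_mul_r, sr_mul_sr, inv_r, inv_sr]
  · convert r_mul_mem_zpowers (2 * i) 0 using 2; ring
  · convert r_mul_mem_zpowers (2 * i) k using 2; ring

theorem lowerCentralSeries_succ_le_zpowers (k : ℕ) :
    (⊤ : Subgroup (DihedralGroup n)).lowerCentralSeries (k + 1) ≤
      Subgroup.zpowers (r (2 ^ (k + 1))) := by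
  induction k with
  | zero =>
    rw [Subgroup.lowerCentralSeries_succ, Subgroup.commutator_le]
    exact fun g _ h _ => by simpa using commutatorElement_mem_zpowers_r_two g h
  | succ k ih =>
    rw [Subgroup.lowerCentralSeries_succ, Subgroup.commutator_le, pow_succ']
    exact fun g hg h _ => commutatorElement_mem_zpowers_r_two_mul (ih hg) h

theorem lowerCentralSeries_two_pow_eq_bot (k : ℕ) :
    (⊤ : Subgroup (DihedralGroup (2 ^ (k + 1)))).lowerCentralSeries (k + 1) = ⊥ := by
  refine eq_bot_iff.mpr ((lowerCentralSeries_succ_le_zpowers k).trans_eq ?_)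
  have h_pow : (2 : ZMod (2 ^ (k + 1))) ^ (k + 1) = 0 := by
    exact_mod_cast ZMod.natCast_self (2 ^ (k + 1))
  rw [h_pow, r_zero, Subgroup.zpowers_one_eq_bot]

theorem cmt_cmt_sr_r_sr (i j : ZMod n) : cmt (cmt (sr i) (r j)) (sr i) = r (-(4 * j)) := by
  simp only [cmt, inv_r, inv_sr, r_mul_r, r_mul_sr, sr_mul_r, sr_mul_sr]
  ring_nf

end DihedralGroup

theorem FreeGroup.cmt_cmt_of_of_of_notMem_lowerCentralSeries_three {α : Type*} [DecidableEq α]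
    {a b : α} (hab : a ≠ b) :
    cmt (cmt (of a) (of b)) (of a) ∉ (⊤ : Subgroup (FreeGroup α)).lowerCentralSeries 3 := by
  intro hmem
  let φ : FreeGroup α →* DihedralGroup (2 ^ 3) :=
    lift fun t => if t = a then .sr 0 else .r 1
  have himage : φ (cmt (cmt (of a) (of b)) (of a)) = 1 := by
    rw [← Subgroup.mem_bot, ← DihedralGroup.lowerCentralSeries_two_pow_eq_bot 2]
    exact Subgroup.lowerCentralSeries_mono 3 le_top
      (Subgroup.map_lowerCentralSeries ⊤ φ 3 ▸ Subgroup.mem_map_of_mem φ hmem)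
  simp only [map_cmt, φ, lift_apply_of, if_pos, if_neg hab.symm,
    DihedralGroup.cmt_cmt_sr_r_sr] at himage
  exact absurd himage (by decide)

theorem stmt_13_general
    (x y : FreeGroup Bool) (hx : x = FreeGroup.of true) (hy : y = FreeGroup.of false)
    (R1 R2 R3 : Subgroup (FreeGroup Bool))
    (hR2 : R2 = Subgroup.normalClosure {cmt x y})
    (hR3 : R3 = Subgroup.normalClosure {cmt (cmt x y) x}) :
    ¬ ∃ r s : FreeGroup Bool, r ∈ R1 ∧ s ∈ R2 ∧ r * s ∈ R3 ∧
      cmt (cmt x y) x * (cmt r s)⁻¹ ∈ (⊤ : Subgroup (FreeGroup Bool)).lowerCentralSeries 3 := by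
  rintro ⟨r, s, -, hs, hrs, hmod⟩
  subst hx hy hR2 hR3
  have hs₁ := Subgroup.normalClosure_cmt_le_lowerCentralSeries_one _ _ hs
  have hr₁ : r ∈ (⊤ : Subgroup (FreeGroup Bool)).lowerCentralSeries 1 :=
    (mul_mem_cancel_right hs₁).mp
      (Subgroup.normalClosure_cmt_le_lowerCentralSeries_one _ _ hrs)
  have hrs₃ := Subgroup.cmt_mem_lowerCentralSeries_three hr₁ hs₁
  exact FreeGroup.cmt_cmt_of_of_of_notMem_lowerCentralSeries_three (by decide)
    ((mul_mem_cancel_right (inv_mem hrs₃)).mp hmod)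

theorem stmt_13
    (x y : FreeGroup Bool) (hx : x = FreeGroup.of true) (hy : y = FreeGroup.of false)
    (R1 R2 R3 : Subgroup (FreeGroup Bool))
    (hR1 : R1 = Subgroup.normalClosure {x})
    (hR2 : R2 = Subgroup.normalClosure {cmt x y})
    (hR3 : R3 = Subgroup.normalClosure {cmt (cmt x y) x}) :
    ¬ ∃ r s : FreeGroup Bool, r ∈ R1 ∧ s ∈ R2 ∧ r * s ∈ R3 ∧
      cmt (cmt x y) x * (cmt r s)⁻¹ ∈ (⊤ : Subgroup (FreeGroup Bool)).lowerCentralSeries 3 :=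
  stmt_13_general x y hx hy R1 R2 R3 hR2 hR3
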